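/- Let x, y, z be three points in ℝⁿ with x, y, z pairwise distinct, and suppose given ε > 0 such that ε < (1/4)·min(dist(x,y), dist(x,z)) · min(|tan α|, |tan β|) · δ, where α is the angle between segment [x,y] and a fixed nonzero vector w not collinear with y−x, and β is the angle between [x, y+w] and w. If z₁ ∈ U_{x,y,ε} and z₂ ∈ U_{x,y+w,ε} with z₂ − z₁ parallel to w, then |Pos₂(z₂) − Pos₁(z₁)| < δ, where Pos is the normalized longitudinal coordinate in [−1,1] along the central axis of each cigar. -/
import Mathlib


open RealInnerProductSpace

/-- The "cigar" atomic domain between `x` and `y` of width parameter `ε` in `ℝⁿ`. -/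
def cigar {n : ℕ} (x y : EuclideanSpace ℝ (Fin n)) (ε : ℝ) :
    Set (EuclideanSpace ℝ (Fin n)) :=
  {z | ∃ t : ℝ, |t| < 1 ∧
    ⟪z - (midpoint ℝ x y + (t / 2) • (y - x)), y - x⟫ = 0 ∧
    dist z (midpoint ℝ x y + (t / 2) • (y - x)) < ε * ((1 - t ^ 2) / 2)}

/-- The normalized longitudinal coordinate of `z` along the central axis of the cigar with
endpoints `x`, `y`: the unique `t` with `z ∈ Π_{x,y}(t)`. -/
noncomputable def pos {n : ℕ} (x y z : EuclideanSpace ℝ (Fin n)) : ℝ :=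
  2 * ⟪z - midpoint ℝ x y, y - x⟫ / ‖y - x‖ ^ 2

-- helper: Cauchy-Schwarz for r ⊥ v against w
lemma perp_inner_bound {n : ℕ} (v r w : EuclideanSpace ℝ (Fin n)) (hv : v ≠ 0)
    (h : ⟪r, v⟫ = 0) :
    ‖v‖ * |⟪r, w⟫| ≤ ‖r‖ * Real.sqrt (‖v‖ ^ 2 * ‖w‖ ^ 2 - ⟪v, w⟫ ^ 2) := by
  have hv0 : (0:ℝ) < ‖v‖ := norm_pos_iff.mpr hv
  set k : ℝ := ⟪v, w⟫ / ‖v‖ ^ 2 with hk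
  set w' : EuclideanSpace ℝ (Fin n) := w - k • v with hw'
  have h1 : ⟪r, w'⟫ = ⟪r, w⟫ := by
    simp [hw', inner_sub_right, inner_smul_right, h]
  have h2 : ‖v‖ ^ 2 * ‖w'‖ ^ 2 = ‖v‖ ^ 2 * ‖w‖ ^ 2 - ⟪v, w⟫ ^ 2 := by
    have e1 : ‖w'‖ ^ 2 = ⟪w', w'⟫ := (real_inner_self_eq_norm_sq w').symm
    have e2 : ⟪w', w'⟫ = ‖w‖ ^ 2 - 2 * (k / 1) * ⟪v, w⟫ + (k / 1) ^ 2 * ‖v‖ ^ 2 := by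
      simp only [hw', inner_sub_left, inner_sub_right, inner_smul_left, inner_smul_right,
        RCLike.conj_to_real, real_inner_comm v w, real_inner_self_eq_norm_sq]
      ring
    have calc' : ∀ A B c : ℝ, A ≠ 0 →
        A * (B - 2 * (c / A) * c + (c / A) ^ 2 * A) = A * B - c ^ 2 := by
      intro A B c hA; field_simp; ring
    rw [e1, e2, div_one, hk]
    exact calc' (‖v‖ ^ 2) (‖w‖ ^ 2) ⟪v, w⟫ (by positivity)
  have h3 : |⟪r, w⟫| ≤ ‖r‖ * ‖w'‖ := by
    rw [← h1]; exact abs_real_inner_le_norm r w'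
  calc ‖v‖ * |⟪r, w⟫| ≤ ‖v‖ * (‖r‖ * ‖w'‖) := by
        exact mul_le_mul_of_nonneg_left h3 (norm_nonneg v)
    _ = ‖r‖ * (‖v‖ * ‖w'‖) := by ring
    _ = ‖r‖ * Real.sqrt (‖v‖ ^ 2 * ‖w‖ ^ 2 - ⟪v, w⟫ ^ 2) := by
        rw [← h2]
        congr 1
        rw [show ‖v‖ ^ 2 * ‖w'‖ ^ 2 = (‖v‖ * ‖w'‖) ^ 2 by ring,
          Real.sqrt_sq (by positivity)]

-- helper: |tan θ| * |⟪v,w⟫| ≤ sqrt (Gram)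
lemma tan_mul_inner_le {n : ℕ} (v w : EuclideanSpace ℝ (Fin n)) :
    |Real.tan (InnerProductGeometry.angle v w)| * |⟪v, w⟫| ≤
      Real.sqrt (‖v‖ ^ 2 * ‖w‖ ^ 2 - ⟪v, w⟫ ^ 2) := by
  set θ := InnerProductGeometry.angle v w with hθ
  have hsin : 0 ≤ Real.sin θ :=
    Real.sin_nonneg_of_nonneg_of_le_pi (InnerProductGeometry.angle_nonneg v w)
      (InnerProductGeometry.angle_le_pi v w)
  have hcos : Real.cos θ * (‖v‖ * ‖w‖) = ⟪v, w⟫ :=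
    InnerProductGeometry.cos_angle_mul_norm_mul_norm v w
  have hsinm : Real.sin θ * (‖v‖ * ‖w‖) = Real.sqrt (‖v‖ ^ 2 * ‖w‖ ^ 2 - ⟪v, w⟫ ^ 2) := by
    rw [InnerProductGeometry.sin_angle_mul_norm_mul_norm v w,
      real_inner_self_eq_norm_sq, real_inner_self_eq_norm_sq]
    ring_nf
  have key : |Real.tan θ * Real.cos θ| ≤ Real.sin θ := by
    rw [Real.tan_eq_sin_div_cos]
    rcases eq_or_ne (Real.cos θ) 0 with h | h
    · simp [h, hsin]
    · rw [div_mul_cancel₀ _ h, abs_of_nonneg hsin]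
  calc |Real.tan θ| * |⟪v, w⟫| = |Real.tan θ * Real.cos θ| * (‖v‖ * ‖w‖) := by
        rw [← hcos, abs_mul (Real.cos θ) (‖v‖ * ‖w‖),
          abs_of_nonneg (by positivity : (0:ℝ) ≤ ‖v‖ * ‖w‖),
          abs_mul (Real.tan θ) (Real.cos θ)]
        ring
    _ ≤ Real.sin θ * (‖v‖ * ‖w‖) := by
        exact mul_le_mul_of_nonneg_right key (by positivity)
    _ = _ := hsinm


lemma final_arith (sA δ ε G SG N₁ N₂ T₁ T₂ U₁ U₂ A₁ A₂ R₁ R₂ : ℝ)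
    (hδ : 0 < δ) (hε0 : 0 < ε) (hG : 0 < G) (hSG : 0 < SG) (hSGsq : SG ^ 2 = G)
    (hN₁ : 0 < N₁) (hN₂ : 0 < N₂)
    (hU₁ : 0 ≤ U₁) (hU₂ : 0 ≤ U₂) (hA₁ : 0 ≤ A₁) (hA₂ : 0 ≤ A₂)
    (cs₁ : N₁ * A₁ ≤ R₁ * SG) (cs₂ : N₂ * A₂ ≤ R₂ * SG)
    (hr₁ : R₁ ≤ ε / 2) (hr₂ : R₂ ≤ ε / 2)
    (tb₁ : T₁ * U₁ ≤ SG) (tb₂ : T₂ * U₂ ≤ SG)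
    (f3 : sA * G ≤ 2 * (U₂ * A₂ + U₁ * A₁))
    (hε : ε < 1 / 4 * min N₁ N₂ * min T₁ T₂ * δ) : sA < δ := by
  have hmD : 0 < min N₁ N₂ := lt_min hN₁ hN₂
  have hmT : 0 < min T₁ T₂ := by
    by_contra h
    push_neg at h
    have h1 : 1 / 4 * min N₁ N₂ * min T₁ T₂ ≤ 0 :=
      mul_nonpos_of_nonneg_of_nonpos (by positivity) h
    have h2 : 1 / 4 * min N₁ N₂ * min T₁ T₂ * δ ≤ 0 :=
      mul_nonpos_of_nonpos_of_nonneg h1 hδ.le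
    linarith
  set K : ℝ := min N₁ N₂ * min T₁ T₂ with hKdef
  have hK : 0 < K := mul_pos hmD hmT
  -- combined bound for side 1
  have d₁ : (T₁ * U₁) * (N₁ * A₁) ≤ ε / 2 * G := by
    calc (T₁ * U₁) * (N₁ * A₁) ≤ SG * (R₁ * SG) :=
          mul_le_mul tb₁ cs₁ (mul_nonneg hN₁.le hA₁) hSG.le
      _ = R₁ * SG ^ 2 := by ring
      _ = R₁ * G := by rw [hSGsq]
      _ ≤ ε / 2 * G := mul_le_mul_of_nonneg_right hr₁ hG.le
  have d₂ : (T₂ * U₂) * (N₂ * A₂) ≤ ε / 2 * G := by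
    calc (T₂ * U₂) * (N₂ * A₂) ≤ SG * (R₂ * SG) :=
          mul_le_mul tb₂ cs₂ (mul_nonneg hN₂.le hA₂) hSG.le
      _ = R₂ * SG ^ 2 := by ring
      _ = R₂ * G := by rw [hSGsq]
      _ ≤ ε / 2 * G := mul_le_mul_of_nonneg_right hr₂ hG.le
  have e₁ : U₁ * A₁ * K ≤ ε / 2 * G := by
    calc U₁ * A₁ * K ≤ U₁ * A₁ * (N₁ * T₁) :=
          mul_le_mul_of_nonneg_left
            (mul_le_mul (min_le_left _ _) (min_le_left _ _) hmT.le hN₁.le)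
            (mul_nonneg hU₁ hA₁)
      _ = (T₁ * U₁) * (N₁ * A₁) := by ring
      _ ≤ ε / 2 * G := d₁
  have e₂ : U₂ * A₂ * K ≤ ε / 2 * G := by
    calc U₂ * A₂ * K ≤ U₂ * A₂ * (N₂ * T₂) :=
          mul_le_mul_of_nonneg_left
            (mul_le_mul (min_le_right _ _) (min_le_right _ _) hmT.le hN₂.le)
            (mul_nonneg hU₂ hA₂)
      _ = (T₂ * U₂) * (N₂ * A₂) := by ring
      _ ≤ ε / 2 * G := d₂
  have f6 : sA * (G * K) < δ / 2 * (G * K) := by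
    calc sA * (G * K) = sA * G * K := by ring
      _ ≤ 2 * (U₂ * A₂ + U₁ * A₁) * K := mul_le_mul_of_nonneg_right f3 hK.le
      _ = 2 * (U₂ * A₂ * K) + 2 * (U₁ * A₁ * K) := by ring
      _ ≤ 2 * (ε / 2 * G) + 2 * (ε / 2 * G) := by linarith
      _ = 2 * ε * G := by ring
      _ < 2 * (1 / 4 * min N₁ N₂ * min T₁ T₂ * δ) * G := by
          have := mul_lt_mul_of_pos_right hε hG
          nlinarith [this]
      _ = δ / 2 * (G * K) := by rw [hKdef]; ring
  have h7 : sA < δ / 2 := lt_of_mul_lt_mul_right f6 (by positivity)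
  linarith

set_option maxHeartbeats 1000000 in
/-- Position distortion: if the cigars with common endpoint `x` and endpoints `y`, `y + w`
are thin enough compared to the angles `α = ∠([x,y], w)` and `β = ∠([x,y+w], w)`, then moving
a point parallel to `w` from one cigar to the other changes its normalized position by less
than `δ`. -/
theorem stmt12 {n : ℕ} (x y w : EuclideanSpace ℝ (Fin n)) (δ ε : ℝ)
    (hxy : x ≠ y) (hw : w ≠ 0) (hnc : ∀ c : ℝ, w ≠ c • (y - x))
    (hδ : 0 < δ) (hε0 : 0 < ε)
    (hε : ε < (1 / 4) * min (dist x y) (dist x (y + w)) *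
        min |Real.tan (InnerProductGeometry.angle (y - x) w)|
            |Real.tan (InnerProductGeometry.angle (y + w - x) w)| * δ)
    (z₁ z₂ : EuclideanSpace ℝ (Fin n))
    (hz₁ : z₁ ∈ cigar x y ε) (hz₂ : z₂ ∈ cigar x (y + w) ε)
    (hpar : ∃ c : ℝ, z₂ - z₁ = c • w) :
    |pos x (y + w) z₂ - pos x y z₁| < δ := by
  obtain ⟨c, hc⟩ := hpar
  obtain ⟨t₁, ht₁, ho₁, hd₁⟩ := hz₁
  obtain ⟨t₂, ht₂, ho₂, hd₂⟩ := hz₂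
  set v₁ : EuclideanSpace ℝ (Fin n) := y - x with hv₁def
  set v₂ : EuclideanSpace ℝ (Fin n) := y + w - x with hv₂def
  have hv₁ : v₁ ≠ 0 := sub_ne_zero.mpr (Ne.symm hxy)
  have hv₂v₁ : v₂ = v₁ + w := by rw [hv₁def, hv₂def]; abel
  have hv₂ : v₂ ≠ 0 := by
    intro h
    apply hnc (-1)
    have h0 : v₁ + w = 0 := by rw [← hv₂v₁, h]
    linear_combination (norm := module) h0
  have hN₁ : (0:ℝ) < ‖v₁‖ := norm_pos_iff.mpr hv₁
  have hN₂ : (0:ℝ) < ‖v₂‖ := norm_pos_iff.mpr hv₂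
  -- pos equals t
  have key₁ : ⟪z₁ - midpoint ℝ x y, v₁⟫ = t₁ / 2 * ‖v₁‖ ^ 2 := by
    have h := ho₁
    rw [sub_add_eq_sub_sub, inner_sub_left, real_inner_smul_left,
      real_inner_self_eq_norm_sq] at h
    linarith
  have key₂ : ⟪z₂ - midpoint ℝ x (y + w), v₂⟫ = t₂ / 2 * ‖v₂‖ ^ 2 := by
    have h := ho₂
    rw [sub_add_eq_sub_sub, inner_sub_left, real_inner_smul_left,
      real_inner_self_eq_norm_sq] at h
    linarith
  have hpos₁ : pos x y z₁ = t₁ := by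
    unfold pos
    rw [← hv₁def, key₁]
    field_simp
  have hpos₂ : pos x (y + w) z₂ = t₂ := by
    unfold pos
    rw [← hv₂def, key₂]
    field_simp
  rw [hpos₁, hpos₂]
  -- the perpendicular components
  set r₁ : EuclideanSpace ℝ (Fin n) := z₁ - (midpoint ℝ x y + (t₁ / 2) • v₁) with hr₁def
  set r₂ : EuclideanSpace ℝ (Fin n) := z₂ - (midpoint ℝ x (y + w) + (t₂ / 2) • v₂) with hr₂def
  have hr₁n : ‖r₁‖ ≤ ε / 2 := by
    have : ‖r₁‖ = dist z₁ (midpoint ℝ x y + (t₁ / 2) • v₁) := (dist_eq_norm _ _).symm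
    rw [this]
    nlinarith [hd₁, sq_nonneg t₁, hε0.le]
  have hr₂n : ‖r₂‖ ≤ ε / 2 := by
    have : ‖r₂‖ = dist z₂ (midpoint ℝ x (y + w) + (t₂ / 2) • v₂) := (dist_eq_norm _ _).symm
    rw [this]
    nlinarith [hd₂, sq_nonneg t₂, hε0.le]
  -- the vector identity
  have hz2 : z₂ = c • w + z₁ := sub_eq_iff_eq_add.mp hc
  have hvec : r₁ - r₂ = ((t₂ - t₁) / 2) • v₁ + ((1 + t₂) / 2 - c) • w := by
    rw [hr₁def, hr₂def, hz2, hv₂v₁, hv₁def, midpoint_eq_smul_add, midpoint_eq_smul_add,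
      invOf_eq_inv]
    module
  -- scalar equations
  have E1 : ⟪r₁, v₁⟫ - ⟪r₂, v₁⟫ =
      ((t₂ - t₁) / 2) * ‖v₁‖ ^ 2 + ((1 + t₂) / 2 - c) * ⟪v₁, w⟫ := by
    rw [← inner_sub_left, hvec, inner_add_left, real_inner_smul_left, real_inner_smul_left,
      real_inner_self_eq_norm_sq, real_inner_comm w v₁]
  have E2 : ⟪r₁, w⟫ - ⟪r₂, w⟫ =
      ((t₂ - t₁) / 2) * ⟪v₁, w⟫ + ((1 + t₂) / 2 - c) * ‖w‖ ^ 2 := by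
    rw [← inner_sub_left, hvec, inner_add_left, real_inner_smul_left, real_inner_smul_left,
      real_inner_self_eq_norm_sq]
  have hQ : ⟪r₂, v₁⟫ + ⟪r₂, w⟫ = 0 := by
    have h := ho₂
    rw [hv₂v₁, inner_add_right] at h
    linarith
  have hu₂ : ⟪v₂, w⟫ = ⟪v₁, w⟫ + ‖w‖ ^ 2 := by
    rw [hv₂v₁, inner_add_left, real_inner_self_eq_norm_sq]
  have star : (t₂ - t₁) * (‖v₁‖ ^ 2 * ‖w‖ ^ 2 - ⟪v₁, w⟫ ^ 2) =
      2 * (⟪v₂, w⟫ * ⟪r₂, w⟫ - ⟪v₁, w⟫ * ⟪r₁, w⟫) := by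
    linear_combination (-2 * ‖w‖ ^ 2) * E1 + (2 * ⟪v₁, w⟫) * E2 + (2 * ‖w‖ ^ 2) * ho₁ +
      (-2 * ‖w‖ ^ 2) * hQ + (-2 * ⟪r₂, w⟫) * hu₂
  -- Gram determinant
  set G : ℝ := ‖v₁‖ ^ 2 * ‖w‖ ^ 2 - ⟪v₁, w⟫ ^ 2 with hGdef
  have hG2 : ‖v₂‖ ^ 2 * ‖w‖ ^ 2 - ⟪v₂, w⟫ ^ 2 = G := by
    have hnorm₂ : ‖v₂‖ ^ 2 = ‖v₁‖ ^ 2 + 2 * ⟪v₁, w⟫ + ‖w‖ ^ 2 := by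
      rw [← real_inner_self_eq_norm_sq, hv₂v₁, real_inner_add_add_self,
        real_inner_self_eq_norm_sq, real_inner_self_eq_norm_sq]
    rw [hGdef, hnorm₂, hu₂]; ring
  have hGpos : (0:ℝ) < G := by
    have h1 : ⟪v₁, w⟫ < ‖v₁‖ * ‖w‖ := by
      rw [inner_lt_norm_mul_iff_real]
      intro h
      apply hnc (‖v₁‖⁻¹ * ‖w‖)
      have := congrArg (fun u : EuclideanSpace ℝ (Fin n) => (‖v₁‖⁻¹ : ℝ) • u) h.symm
      simpa [smul_smul, inv_mul_cancel₀ (ne_of_gt hN₁)] using this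
    have h2 : ⟪v₁, -w⟫ < ‖v₁‖ * ‖-w‖ := by
      rw [inner_lt_norm_mul_iff_real]
      intro h
      apply hnc (-(‖v₁‖⁻¹ * ‖w‖))
      rw [neg_smul]
      have h' : -w = (‖v₁‖⁻¹ * ‖w‖) • v₁ := by
        have := congrArg (fun u : EuclideanSpace ℝ (Fin n) => (‖v₁‖⁻¹ : ℝ) • u) h.symm
        simpa [smul_smul, inv_mul_cancel₀ (ne_of_gt hN₁), norm_neg] using this
      rw [← h', neg_neg]
    rw [inner_neg_right, norm_neg] at h2
    rw [hGdef]
    nlinarith [h1, h2]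
  -- square root of the Gram determinant
  have hSG : (0:ℝ) < Real.sqrt G := Real.sqrt_pos.mpr hGpos
  have hSGsq : Real.sqrt G ^ 2 = G := Real.sq_sqrt hGpos.le
  have cs₁ : ‖v₁‖ * |⟪r₁, w⟫| ≤ ‖r₁‖ * Real.sqrt G := by
    have h := perp_inner_bound v₁ r₁ w hv₁ ho₁
    rwa [← hGdef] at h
  have cs₂ : ‖v₂‖ * |⟪r₂, w⟫| ≤ ‖r₂‖ * Real.sqrt G := by
    have h := perp_inner_bound v₂ r₂ w hv₂ ho₂
    rwa [hG2] at h
  have tb₁ : |Real.tan (InnerProductGeometry.angle v₁ w)| * |⟪v₁, w⟫| ≤ Real.sqrt G := by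
    have h := tan_mul_inner_le v₁ w
    rwa [← hGdef] at h
  have tb₂ : |Real.tan (InnerProductGeometry.angle v₂ w)| * |⟪v₂, w⟫| ≤ Real.sqrt G := by
    have h := tan_mul_inner_le v₂ w
    rwa [hG2] at h
  -- rewrite the smallness hypothesis
  have hdist₁ : dist x y = ‖v₁‖ := by rw [dist_eq_norm, norm_sub_rev, ← hv₁def]
  have hdist₂ : dist x (y + w) = ‖v₂‖ := by rw [dist_eq_norm, norm_sub_rev, ← hv₂def]
  rw [hdist₁, hdist₂] at hε
  -- the main estimate
  have f3 : |t₂ - t₁| * G ≤ 2 * (|⟪v₂, w⟫| * |⟪r₂, w⟫| + |⟪v₁, w⟫| * |⟪r₁, w⟫|) := by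
    have habs : |t₂ - t₁| * G = |(t₂ - t₁) * G| := by rw [abs_mul, abs_of_pos hGpos]
    rw [habs, star]
    have tri : |⟪v₂, w⟫ * ⟪r₂, w⟫ - ⟪v₁, w⟫ * ⟪r₁, w⟫| ≤
        |⟪v₂, w⟫ * ⟪r₂, w⟫| + |⟪v₁, w⟫ * ⟪r₁, w⟫| := abs_sub _ _
    calc |2 * (⟪v₂, w⟫ * ⟪r₂, w⟫ - ⟪v₁, w⟫ * ⟪r₁, w⟫)|
        = 2 * |⟪v₂, w⟫ * ⟪r₂, w⟫ - ⟪v₁, w⟫ * ⟪r₁, w⟫| := by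
          rw [abs_mul]; norm_num
      _ ≤ 2 * (|⟪v₂, w⟫ * ⟪r₂, w⟫| + |⟪v₁, w⟫ * ⟪r₁, w⟫|) := by linarith
      _ = 2 * (|⟪v₂, w⟫| * |⟪r₂, w⟫| + |⟪v₁, w⟫| * |⟪r₁, w⟫|) := by
          rw [abs_mul, abs_mul]
  exact final_arith (|t₂ - t₁|) δ ε G (Real.sqrt G) ‖v₁‖ ‖v₂‖
    |Real.tan (InnerProductGeometry.angle v₁ w)|
    |Real.tan (InnerProductGeometry.angle v₂ w)|
    (|⟪v₁, w⟫|) (|⟪v₂, w⟫|) (|⟪r₁, w⟫|) (|⟪r₂, w⟫|) ‖r₁‖ ‖r₂‖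
    hδ hε0 hGpos hSG hSGsq hN₁ hN₂ (abs_nonneg _) (abs_nonneg _) (abs_nonneg _) (abs_nonneg _)
    cs₁ cs₂ hr₁n hr₂n tb₁ tb₂ f3 hε
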